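/- There exists a resilient supervisor S^R for the attacked closed-loop system G^R with respect to Σ_{c,v} and G_robust if and only if the attacked system Sa/Ga is AE-robust recoverable with respect to G_robust. -/

import Mathlib

/-!
Common formalization of supervisory control of DES under actuator-enablement
attacks, following the natural-language context.

* A plant is a DFA with partial transition function `f : X → E → Option X`
  and initial state `x0`; `runFrom` extends `f` to strings; `Lang f x0` is the
  generated language.
* A strict subautomaton of an automaton is represented by its state set
  `Q : Set X`, with induced transition function `subStep f Q`.
* Attacked events are modelled by the alphabet `E ⊕ E`: `Sum.inl e` is the
  ordinary event `e`, `Sum.inr e` is the attacked copy `eᵃ` (meaningful for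
  `e ∈ Scv`).
* The attacked plant `gaStep`, attacked supervisor `saStep` (state `none`
  playing the role of the fresh state `A`), and their synchronous composition
  `grStep` (the attacked closed-loop system `G^R = Sa ∥ Ga`) are defined below,
  together with detection states, robust-recovery, the resilient specification
  `Ha`, supervisors for `G^R`, and resilience.
-/

open Classical List

namespace RobustRec

variable {X : Type*} {E : Type*}

/-- Extension of a partial transition function to strings. -/
def runFrom (f : X → E → Option X) : X → List E → Option X
  | x, [] => some x
  | x, e :: w => (f x e).bind fun y => runFrom f y w

/-- Language generated from state `x0`. -/
def Lang (f : X → E → Option X) (x0 : X) : Set (List E) :=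
  {w | (runFrom f x0 w).isSome}

/-- Transition function of the strict (induced) subautomaton with state set `Q`:
a transition is defined iff it is defined in the big automaton and both its
endpoints lie in `Q`. -/
noncomputable def subStep (f : X → E → Option X) (Q : Set X) : X → E → Option X :=
  fun x e => (f x e).bind fun y => if x ∈ Q ∧ y ∈ Q then some y else none

/-- Vulnerable states: those where some vulnerable controllable event is feasible. -/
def vulnStates (f : X → E → Option X) (Scv : Set E) : Set X :=
  {x | ∃ e ∈ Scv, (f x e).isSome}

/-- A supervisor for the plant `(f, x0)`, represented by its state set `XS`
(the induced strict subautomaton): it contains `x0`, is controllable w.r.t.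
the uncontrollable events `Suc`, and is safe w.r.t. the unsafe states `XUS`. -/
structure IsSupervisor (f : X → E → Option X) (x0 : X) (Suc : Set E)
    (XUS : Set X) (XS : Set X) : Prop where
  init_mem : x0 ∈ XS
  controllable : ∀ x ∈ XS, ∀ e ∈ Suc, ∀ y, f x e = some y → y ∈ XS
  safe : ∀ x ∈ XS, x ∉ XUS

/-- The attacked plant `Ga`: all transitions of `G`, plus, for every transition
on a vulnerable event `σ ∈ Scv`, a parallel transition on its attacked copy. -/
noncomputable def gaStep (f : X → E → Option X) (Scv : Set E) :
    X → E ⊕ E → Option X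
  | x, Sum.inl e => f x e
  | x, Sum.inr e => if e ∈ Scv then f x e else none

/-- The attacked supervisor `Sa`: states are `some x` for states `x` of `S`
plus the fresh state `A = none` with a self-loop on every event; for every
state `x` of `S` and `σ ∈ Scv` with `f_S(x,σ)` undefined there is a transition
on `σᵃ` from `x` to `A`. -/
noncomputable def saStep (f : X → E → Option X) (XS : Set X) (Scv : Set E) :
    Option X → E ⊕ E → Option (Option X)
  | none, _ => some none
  | some x, Sum.inl e => (subStep f XS x e).map some
  | some x, Sum.inr e =>
      if e ∈ Scv ∧ x ∈ XS ∧ subStep f XS x e = none then some none else none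

/-- Synchronous composition of two automata over a common alphabet. -/
def prodStep {X1 X2 A : Type*} (f1 : X1 → A → Option X1) (f2 : X2 → A → Option X2) :
    X1 × X2 → A → Option (X1 × X2) :=
  fun p a => (f1 p.1 a).bind fun y1 => (f2 p.2 a).map fun y2 => (y1, y2)

/-- The attacked closed-loop system `G^R = Sa ∥ Ga`. Its post-attack states are
those of the form `(none, x)`, i.e. `(A, x)`. -/
noncomputable def grStep (f : X → E → Option X) (XS : Set X) (Scv : Set E) :
    Option X × X → E ⊕ E → Option (Option X × X) :=
  prodStep (saStep f XS Scv) (gaStep f Scv)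

/-- Initial state of `G^R`. -/
def grInit (x0 : X) : Option X × X := (some x0, x0)

/-- Embedding of strings over `Σ` into strings over `Σ ∪ Σᵃ_{c,v}`. -/
def embed : List E → List (E ⊕ E) := List.map Sum.inl

/-- The language `L(Sa/Ga)` of the attacked closed-loop system. -/
noncomputable def GRLang (f : X → E → Option X) (x0 : X) (XS : Set X) (Scv : Set E) :
    Set (List (E ⊕ E)) :=
  Lang (grStep f XS Scv) (grInit x0)

/-- The detection language `L_det = {sσ ∈ L(G) | s ∈ L(S/G), σ ∈ Σ_{c,v},
sσᵃ ∈ L(Sa/Ga)}`. -/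
noncomputable def detLang (f : X → E → Option X) (x0 : X) (XS : Set X) (Scv : Set E) :
    Set (List E) :=
  {w | ∃ s σ, w = s ++ [σ] ∧ σ ∈ Scv ∧ w ∈ Lang f x0 ∧
        s ∈ Lang (subStep f XS) x0 ∧ embed s ++ [Sum.inr σ] ∈ GRLang f x0 XS Scv}

/-- The detection states `X_det = {f(x0, sσ) : sσ ∈ L_det}`. -/
noncomputable def detStates (f : X → E → Option X) (x0 : X) (XS : Set X) (Scv : Set E) :
    Set X :=
  {x | ∃ w ∈ detLang f x0 XS Scv, runFrom f x0 w = some x}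

/-- `r` is a robust-recovery strategy from `x` relative to the candidate set `R`
of recoverable states, the robust region `XR` and the bad states
`Bad = X_v ∪ X_US`: (1) `r` leads into `XR`; (2) no prefix of `r` visits `Bad`;
(3) no prefix of `r` can uncontrollably reach `Bad`; (4) any one-step
uncontrollable deviation from `r` lands in `R`. -/
def IsRecoveryPath (f : X → E → Option X) (Suc : Set E) (XR Bad : Set X)
    (R : Set X) (x : X) (r : List E) : Prop :=
  (∃ y ∈ XR, runFrom f x r = some y) ∧
  (∀ t, t <+: r → ∀ y, runFrom f x t = some y → y ∉ Bad) ∧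
  (∀ t, t <+: r → ∀ u : List E, (∀ e ∈ u, e ∈ Suc) →
      ∀ y, runFrom f x (t ++ u) = some y → y ∉ Bad) ∧
  (∀ t, t <+: r → ∀ e ∈ Suc, ∀ y, runFrom f x (t ++ [e]) = some y →
      ¬ (t ++ [e]) <+: r → y ∈ R)

/-- The set `R` of AE-robust recoverable states: the largest subset of
`X \ Bad` each of whose elements admits a robust-recovery strategy (relative
to the set itself). -/
def recSet (f : X → E → Option X) (Suc : Set E) (XR Bad : Set X) : Set X :=
  ⋃₀ {R | R ⊆ Badᶜ ∧ ∀ x ∈ R, ∃ r, IsRecoveryPath f Suc XR Bad R x r}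

/-- The attacked system `Sa/Ga` is AE-robust recoverable w.r.t. the robust
region `XR` if every detection state is AE-robust recoverable. -/
noncomputable def AERobustRecoverable (f : X → E → Option X) (x0 : X)
    (Suc Scv : Set E) (XUS XS XR : Set X) : Prop :=
  detStates f x0 XS Scv ⊆ recSet f Suc XR (vulnStates f Scv ∪ XUS)

/-- Reachable states of `G^R` (the state set of the synchronous composition). -/
noncomputable def grStates (f : X → E → Option X) (x0 : X) (XS : Set X) (Scv : Set E) :
    Set (Option X × X) :=
  {p | ∃ w, runFrom (grStep f XS Scv) (grInit x0) w = some p}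

/-- A supervisor for `G^R`, represented by its state set `Q` (inducing a strict
subautomaton of `G^R`): it contains the initial state and is controllable
w.r.t. `Suc` (attacked events being controllable). -/
structure IsGRSupervisor (f : X → E → Option X) (x0 : X) (Suc Scv : Set E)
    (XS : Set X) (Q : Set (Option X × X)) : Prop where
  subset : Q ⊆ grStates f x0 XS Scv
  init_mem : grInit x0 ∈ Q
  controllable : ∀ p ∈ Q, ∀ e ∈ Suc, ∀ q, grStep f XS Scv p (Sum.inl e) = some q → q ∈ Q

/-- State set of the resilient specification `Ha`: `G^R` minus every post-attack
state `(A, x)` with `x ∈ X_v ∪ X_US`. -/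
def haCarrier (f : X → E → Option X) (Scv : Set E) (XUS : Set X) :
    Set (Option X × X) :=
  {p | ¬ (p.1 = none ∧ p.2 ∈ vulnStates f Scv ∪ XUS)}

/-- Marked states of `Ha`: post-attack states `(A, x)` with `x` in the robust
region. -/
def haMarked (XR : Set X) : Set (Option X × X) :=
  {p | p.1 = (none : Option X) ∧ p.2 ∈ XR}

/-- The closed-loop language `L(S^R/G^R) = L(S^R)` of a supervisor `Q` for `G^R`. -/
noncomputable def SRLang (f : X → E → Option X) (x0 : X) (XS : Set X) (Scv : Set E)
    (Q : Set (Option X × X)) : Set (List (E ⊕ E)) :=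
  Lang (subStep (grStep f XS Scv) Q) (grInit x0)

/-- `S^R` is safe w.r.t. the resilient specification `Ha`: `L(S^R) ⊆ L(Ha)`. -/
noncomputable def SafeWrtHa (f : X → E → Option X) (x0 : X) (XS : Set X)
    (Scv : Set E) (XUS : Set X) (Q : Set (Option X × X)) : Prop :=
  SRLang f x0 XS Scv Q ⊆
    Lang (subStep (grStep f XS Scv) (haCarrier f Scv XUS)) (grInit x0)

/-- `S^R` is nonblocking: from every post-attack state of `S^R`, a marked state
of `Ha` is reachable within `S^R`. -/
noncomputable def NonblockingSR (f : X → E → Option X) (XS : Set X) (Scv : Set E)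
    (XR : Set X) (Q : Set (Option X × X)) : Prop :=
  ∀ p ∈ Q, p.1 = (none : Option X) →
    ∃ w q, runFrom (subStep (grStep f XS Scv) Q) p w = some q ∧ q ∈ haMarked XR

/-- `S^R` is maximally permissive among safe nonblocking supervisors for `G^R`. -/
noncomputable def MaxPermissive (f : X → E → Option X) (x0 : X) (Suc Scv : Set E)
    (XS XUS XR : Set X) (Q : Set (Option X × X)) : Prop :=
  ∀ Q', IsGRSupervisor f x0 Suc Scv XS Q' → SafeWrtHa f x0 XS Scv XUS Q' →
    NonblockingSR f XS Scv XR Q' → SRLang f x0 XS Scv Q' ⊆ SRLang f x0 XS Scv Q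

/-- `S^R` (given by its state set `Q`) is resilient w.r.t. `Scv` and the robust
region `XR`: it permits the full nominal behavior `L(S/G)`, and after any
AE-attack `sσᵃ` feasible in `L(Sa/Ga)` it permits the attack, keeps all its
subsequent behavior out of `Bad = X_v ∪ X_US`, and can always be extended
within `L(S^R)` to reach a post-attack state `(A, x)` with `x ∈ XR`; i.e. it
enforces a robust-recovery strategy from the detection state. -/
noncomputable def ResilientSup (f : X → E → Option X) (x0 : X) (Scv : Set E)
    (XS XR Bad : Set X) (Q : Set (Option X × X)) : Prop :=
  (∀ s ∈ Lang (subStep f XS) x0, embed s ∈ SRLang f x0 XS Scv Q) ∧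
  ∀ s : List E, embed s ∈ SRLang f x0 XS Scv Q →
    ∀ σ ∈ Scv, embed s ++ [Sum.inr σ] ∈ GRLang f x0 XS Scv →
      embed s ++ [Sum.inr σ] ∈ SRLang f x0 XS Scv Q ∧
      ∀ t : List E, embed s ++ [Sum.inr σ] ++ embed t ∈ SRLang f x0 XS Scv Q →
        (∀ t', t' <+: t → ∀ y, runFrom f x0 (s ++ σ :: t') = some y →
            y ∉ Bad) ∧
        ∃ u q, runFrom (subStep (grStep f XS Scv) Q) (grInit x0)
                 (embed s ++ [Sum.inr σ] ++ embed t ++ u) = some q ∧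
               q.1 = (none : Option X) ∧ q.2 ∈ XR

/-- A prefix-closed language. -/
def PrefixClosed (K : Set (List E)) : Prop := ∀ s t : List E, s ++ t ∈ K → s ∈ K

/-- `K` is controllable w.r.t. the language `M` and uncontrollable events `Suc`. -/
def ControllableLang (K M : Set (List E)) (Suc : Set E) : Prop :=
  ∀ s ∈ K, ∀ e ∈ Suc, s ++ [e] ∈ M → s ++ [e] ∈ K

/-- The supremal controllable (prefix-closed) sublanguage of `M` w.r.t. `LG`. -/
def supC (M LG : Set (List E)) (Suc : Set E) : Set (List E) :=
  ⋃₀ {K | K ⊆ M ∧ PrefixClosed K ∧ ControllableLang K LG Suc}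


/-!
The AE-robust recoverable states form the largest set `R ⊆ Badᶜ` that is closed under
uncontrollable events and from each of whose states the robust region can be reached without
leaving `R`. A resilient supervisor produces such a set, namely the plant states it permits after
an attack followed by ordinary events, and this set contains every detection state. Conversely,
if every detection state is recoverable, the supervisor that follows `S` until an attack and
afterwards confines the plant to the recoverable states is resilient: it is controllable because
recoverable states are closed under uncontrollable events, and after an attack it can follow a
recovery strategy without leaving the recoverable states.
-/

section Automaton

variable {S A : Type*} {g : S → A → Option S}

theorem runFrom_append (g : S → A → Option S) (x : S) (s t : List A) :
    runFrom g x (s ++ t) = (runFrom g x s).bind fun y => runFrom g y t := by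
  induction s generalizing x with
  | nil => rfl
  | cons a s ih => simp only [List.cons_append, runFrom, Option.bind_assoc, ih]

theorem runFrom_append_of_eq_some {x y : S} {s : List A} (h : runFrom g x s = some y)
    (t : List A) : runFrom g x (s ++ t) = runFrom g y t := by
  rw [runFrom_append, h, Option.bind_some]

theorem runFrom_singleton (g : S → A → Option S) (x : S) (a : A) :
    runFrom g x [a] = g x a := by
  simp [runFrom]

theorem prefixClosed_Lang (g : S → A → Option S) (x : S) : PrefixClosed (Lang g x) := by
  intro s t h
  simp only [Lang, Set.mem_ofPred_eq, runFrom_append] at h ⊢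
  cases hs : runFrom g x s <;> simp_all

theorem subStep_eq_some {Q : Set S} {x y : S} {a : A} :
    subStep g Q x a = some y ↔ g x a = some y ∧ x ∈ Q ∧ y ∈ Q := by
  unfold subStep
  cases g x a <;> aesop

theorem runFrom_of_runFrom_subStep {Q : Set S} {w : List A} :
    ∀ {x y : S}, runFrom (subStep g Q) x w = some y → runFrom g x w = some y := by
  induction w with
  | nil => exact id
  | cons a w ih =>
    intro x y h
    simp only [runFrom, Option.bind_eq_some_iff, subStep_eq_some] at h ⊢
    obtain ⟨z, ⟨hz, -⟩, hw⟩ := h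
    exact ⟨z, hz, ih hw⟩

theorem Lang_subStep_subset (g : S → A → Option S) (Q : Set S) (x : S) :
    Lang (subStep g Q) x ⊆ Lang g x := by
  intro w hw
  obtain ⟨y, hy⟩ := Option.isSome_iff_exists.1 hw
  exact Option.isSome_iff_exists.2 ⟨y, runFrom_of_runFrom_subStep hy⟩

theorem mem_of_runFrom_subStep {Q : Set S} {w : List A} :
    ∀ {x y : S}, x ∈ Q → runFrom (subStep g Q) x w = some y → y ∈ Q := by
  induction w with
  | nil => rintro x y hx ⟨⟩; exact hx
  | cons a w ih =>
    intro x y _ h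
    simp only [runFrom, Option.bind_eq_some_iff, subStep_eq_some] at h
    obtain ⟨z, ⟨-, -, hz⟩, hw⟩ := h
    exact ih hz hw

theorem runFrom_subStep_of_prefix {Q : Set S} {x y z : S} {t w : List A}
    (h : runFrom (subStep g Q) x w = some y) (ht : t <+: w) (hz : runFrom g x t = some z) :
    runFrom (subStep g Q) x t = some z := by
  obtain ⟨d, rfl⟩ := ht
  rw [runFrom_append, Option.bind_eq_some_iff] at h
  obtain ⟨z', hz', -⟩ := h
  obtain rfl : z' = z := Option.some_inj.1 ((runFrom_of_runFrom_subStep hz').symm.trans hz)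
  exact hz'

theorem runFrom_subStep_of_forall_prefix {Q : Set S} {w : List A} :
    ∀ {x y : S}, x ∈ Q → (∀ t, t <+: w → ∀ z, runFrom g x t = some z → z ∈ Q) →
      runFrom g x w = some y → runFrom (subStep g Q) x w = some y := by
  induction w with
  | nil => exact fun _ _ h => h
  | cons a w ih =>
    intro x y hx hQ h
    simp only [runFrom, Option.bind_eq_some_iff, subStep_eq_some] at h ⊢
    obtain ⟨z, hz, hw⟩ := h
    have hzQ : z ∈ Q := hQ [a] (List.cons_prefix_cons.2 ⟨rfl, List.nil_prefix⟩) z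
      (by simp [runFrom, hz])
    refine ⟨z, ⟨hz, hx, hzQ⟩, ih hzQ (fun t ht z' hz' => ?_) hw⟩
    exact hQ (a :: t) (List.cons_prefix_cons.2 ⟨rfl, ht⟩) z' (by simp [runFrom, hz, hz'])

theorem runFrom_subStep_reach_inter (g : S → A → Option S) (x₀ : S) (C : Set S)
    (w : List A) :
    runFrom (subStep g ({x | ∃ v, runFrom g x₀ v = some x} ∩ C)) x₀ w =
      runFrom (subStep g C) x₀ w := by
  set R := {x | ∃ v, runFrom g x₀ v = some x}
  suffices ∀ x ∈ R, runFrom (subStep g (R ∩ C)) x w = runFrom (subStep g C) x w from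
    this x₀ ⟨[], rfl⟩
  induction w with
  | nil => exact fun _ _ => rfl
  | cons a w ih =>
    intro x hx
    have hsucc : ∀ y, g x a = some y → y ∈ R := fun y hy =>
      let ⟨v, hv⟩ := hx
      ⟨v ++ [a], by rw [runFrom_append_of_eq_some hv, runFrom_singleton, hy]⟩
    have hstep : subStep g (R ∩ C) x a = subStep g C x a := by
      unfold subStep
      cases hy : g x a with
      | none => rfl
      | some y => simp [hx, hsucc y hy]
    simp only [runFrom, hstep]
    cases hy : subStep g C x a with
    | none => rfl
    | some y => exact ih y (hsucc y (subStep_eq_some.1 hy).1)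

theorem mem_of_runFrom_of_closed {R : Set S} {B : Set A}
    (hR : ∀ x ∈ R, ∀ a ∈ B, ∀ y, g x a = some y → y ∈ R) {u : List A}
    (hu : ∀ a ∈ u, a ∈ B) : ∀ {x y : S}, x ∈ R → runFrom g x u = some y → y ∈ R := by
  induction u with
  | nil => rintro x y hx ⟨⟩; exact hx
  | cons a u ih =>
    intro x y hx h
    simp only [runFrom, Option.bind_eq_some_iff] at h
    obtain ⟨z, hz, hw⟩ := h
    exact ih (fun b hb => hu b (List.mem_cons_of_mem a hb))
      (hR x hx a (hu a List.mem_cons_self) z hz) hw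

theorem prodStep_eq_some {S₁ S₂ : Type*} {g₁ : S₁ → A → Option S₁} {g₂ : S₂ → A → Option S₂}
    {p q : S₁ × S₂} {a : A} :
    prodStep g₁ g₂ p a = some q ↔ g₁ p.1 a = some q.1 ∧ g₂ p.2 a = some q.2 := by
  obtain ⟨q₁, q₂⟩ := q
  simp [prodStep, Option.bind_eq_some_iff]

theorem runFrom_prodStep_eq_some {S₁ S₂ : Type*} {g₁ : S₁ → A → Option S₁}
    {g₂ : S₂ → A → Option S₂} {w : List A} :
    ∀ {p q : S₁ × S₂}, runFrom (prodStep g₁ g₂) p w = some q ↔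
      runFrom g₁ p.1 w = some q.1 ∧ runFrom g₂ p.2 w = some q.2 := by
  induction w with
  | nil => simp [runFrom, Prod.ext_iff]
  | cons a w ih =>
    intro p q
    simp only [runFrom, Option.bind_eq_some_iff, prodStep_eq_some, ih, Prod.exists]
    constructor
    · rintro ⟨r₁, r₂, ⟨h₁, h₂⟩, h₁', h₂'⟩
      exact ⟨⟨r₁, h₁, h₁'⟩, ⟨r₂, h₂, h₂'⟩⟩
    · rintro ⟨⟨r₁, h₁, h₁'⟩, ⟨r₂, h₂, h₂'⟩⟩
      exact ⟨r₁, r₂, ⟨h₁, h₂⟩, h₁', h₂'⟩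

end Automaton

section Recovery

variable {f : X → E → Option X} {Suc : Set E} {XR Bad : Set X}

structure RecoveryInvariant (f : X → E → Option X) (Suc : Set E) (XR Bad R : Set X) :
    Prop where
  subset_compl : R ⊆ Badᶜ
  uncontrollable : ∀ x ∈ R, ∀ e ∈ Suc, ∀ y, f x e = some y → y ∈ R
  reach : ∀ x ∈ R, ∃ r, ∃ y ∈ XR, runFrom (subStep f R) x r = some y

theorem RecoveryInvariant.isRecoveryPath {R : Set X} {x y : X} {r : List E}
    (hR : RecoveryInvariant f Suc XR Bad R) (hx : x ∈ R)
    (hr : runFrom (subStep f R) x r = some y) (hy : y ∈ XR) :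
    IsRecoveryPath f Suc XR Bad R x r := by
  have hpre : ∀ t, t <+: r → ∀ z, runFrom f x t = some z → z ∈ R := fun t ht z hz =>
    mem_of_runFrom_subStep hx (runFrom_subStep_of_prefix hr ht hz)
  have hunc : ∀ t, t <+: r → ∀ u : List E, (∀ e ∈ u, e ∈ Suc) →
      ∀ z, runFrom f x (t ++ u) = some z → z ∈ R := by
    intro t ht u hu z hz
    rw [runFrom_append, Option.bind_eq_some_iff] at hz
    obtain ⟨z', hz', hz⟩ := hz
    exact mem_of_runFrom_of_closed hR.uncontrollable hu (hpre t ht z' hz') hz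
  exact ⟨⟨y, hy, runFrom_of_runFrom_subStep hr⟩,
    fun t ht z hz => hR.subset_compl (hpre t ht z hz),
    fun t ht u hu z hz => hR.subset_compl (hunc t ht u hu z hz),
    fun t ht e he z hz _ => hunc t ht [e] (by simpa using he) z hz⟩

theorem RecoveryInvariant.subset_recSet {R : Set X} (hR : RecoveryInvariant f Suc XR Bad R) :
    R ⊆ recSet f Suc XR Bad :=
  Set.subset_sUnion_of_mem ⟨hR.subset_compl, fun x hx =>
    let ⟨r, _, hy, hr⟩ := hR.reach x hx
    ⟨r, hR.isRecoveryPath hx hr hy⟩⟩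

theorem IsRecoveryPath.mono {R R' : Set X} (hRR' : R ⊆ R') {x : X} {r : List E}
    (h : IsRecoveryPath f Suc XR Bad R x r) : IsRecoveryPath f Suc XR Bad R' x r :=
  ⟨h.1, h.2.1, h.2.2.1, fun t ht e he y hy hnp => hRR' (h.2.2.2 t ht e he y hy hnp)⟩

theorem IsRecoveryPath.suffix {R : Set X} {x y : X} {t d : List E}
    (h : IsRecoveryPath f Suc XR Bad R x (t ++ d)) (hy : runFrom f x t = some y) :
    IsRecoveryPath f Suc XR Bad
      (R ∪ {z | ∃ t', t' <+: t ++ d ∧ runFrom f x t' = some z}) y d := by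
  obtain ⟨⟨z, hz, hrun⟩, hsafe, hunc, hdev⟩ := h
  have hshift : ∀ v, runFrom f x (t ++ v) = runFrom f y v := runFrom_append_of_eq_some hy
  have hpre : ∀ {t'}, t' <+: d → t ++ t' <+: t ++ d := (List.prefix_append_right_inj t).2
  refine ⟨⟨z, hz, by rwa [← hshift]⟩, fun t' ht' z hz => hsafe _ (hpre ht') z (by rwa [hshift]),
    fun t' ht' u hu z hz => hunc _ (hpre ht') u hu z (by rwa [List.append_assoc, hshift]),
    fun t' ht' e he z hz _ => ?_⟩
  have hz' : runFrom f x (t ++ t' ++ [e]) = some z := by rwa [List.append_assoc, hshift]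
  by_cases hmem : t ++ t' ++ [e] <+: t ++ d
  · exact Or.inr ⟨_, hmem, hz'⟩
  · exact Or.inl (hdev _ (hpre ht') e he z hz' hmem)

theorem recSet_subset_compl : recSet f Suc XR Bad ⊆ Badᶜ := by
  rintro x ⟨R, ⟨hR, -⟩, hx⟩
  exact hR hx

theorem exists_isRecoveryPath_of_mem_recSet {x : X} (hx : x ∈ recSet f Suc XR Bad) :
    ∃ r, IsRecoveryPath f Suc XR Bad (recSet f Suc XR Bad) x r := by
  obtain ⟨R, hR, hxR⟩ := hx
  obtain ⟨r, hr⟩ := hR.2 x hxR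
  exact ⟨r, hr.mono (Set.subset_sUnion_of_mem hR)⟩

theorem mem_recSet_of_prefix {x y : X} {r t : List E} (hx : x ∈ recSet f Suc XR Bad)
    (hr : IsRecoveryPath f Suc XR Bad (recSet f Suc XR Bad) x r) (ht : t <+: r)
    (hy : runFrom f x t = some y) : y ∈ recSet f Suc XR Bad := by
  set RS := recSet f Suc XR Bad
  let R' : Set X := {y | ∃ x ∈ RS, ∃ r, IsRecoveryPath f Suc XR Bad RS x r ∧
    ∃ t, t <+: r ∧ runFrom f x t = some y}
  have hRS : RS ⊆ R' := fun z hz =>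
    let ⟨r, hr⟩ := exists_isRecoveryPath_of_mem_recSet hz
    ⟨z, hz, r, hr, [], List.nil_prefix, rfl⟩
  suffices R' ⊆ RS from this ⟨x, hx, r, hr, t, ht, hy⟩
  refine Set.subset_sUnion_of_mem ⟨?_, ?_⟩
  · rintro z ⟨x, -, r, hr, t, ht, hz⟩
    exact hr.2.1 t ht z hz
  · rintro z ⟨x, hx, r, hr, t, ⟨d, rfl⟩, hz⟩
    refine ⟨d, (hr.suffix hz).mono ?_⟩
    rintro w (hw | ⟨t', ht', hw⟩)
    · exact hRS hw
    · exact ⟨x, hx, t ++ d, hr, t', ht', hw⟩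

theorem recoveryInvariant_recSet :
    RecoveryInvariant f Suc XR Bad (recSet f Suc XR Bad) where
  subset_compl := recSet_subset_compl
  uncontrollable x hx e he y hy := by
    obtain ⟨r, hr⟩ := exists_isRecoveryPath_of_mem_recSet hx
    have hrun : runFrom f x [e] = some y := by rw [runFrom_singleton, hy]
    by_cases hp : [e] <+: r
    · exact mem_recSet_of_prefix hx hr hp hrun
    · exact hr.2.2.2 [] List.nil_prefix e he y hrun hp
  reach x hx := by
    obtain ⟨r, hr⟩ := exists_isRecoveryPath_of_mem_recSet hx
    obtain ⟨y, hy, hrun⟩ := hr.1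
    exact ⟨r, y, hy, runFrom_subStep_of_forall_prefix hx
      (fun t ht z hz => mem_recSet_of_prefix hx hr ht hz) hrun⟩

end Recovery

section Attack

variable {f : X → E → Option X} {XS : Set X} {Scv : Set E}

theorem embed_append (s t : List E) : embed (s ++ t) = embed s ++ embed t :=
  List.map_append

theorem grStep_eq_some {p q : Option X × X} {a : E ⊕ E} :
    grStep f XS Scv p a = some q ↔
      saStep f XS Scv p.1 a = some q.1 ∧ gaStep f Scv p.2 a = some q.2 :=
  prodStep_eq_some

theorem runFrom_grStep_eq_some {p q : Option X × X} {w : List (E ⊕ E)} :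
    runFrom (grStep f XS Scv) p w = some q ↔
      runFrom (saStep f XS Scv) p.1 w = some q.1 ∧ runFrom (gaStep f Scv) p.2 w = some q.2 :=
  runFrom_prodStep_eq_some

theorem of_gaStep_eq_some {x y : X} {a : E ⊕ E} (h : gaStep f Scv x a = some y) :
    f x (Sum.elim id id a) = some y := by
  cases a with
  | inl e => exact h
  | inr e =>
    simp only [gaStep] at h
    split_ifs at h
    exact h

theorem runFrom_of_runFrom_gaStep {w : List (E ⊕ E)} :
    ∀ {x y : X}, runFrom (gaStep f Scv) x w = some y →
      runFrom f x (w.map (Sum.elim id id)) = some y := by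
  induction w with
  | nil => exact id
  | cons a w ih =>
    intro x y h
    simp only [runFrom, Option.bind_eq_some_iff, List.map_cons] at h ⊢
    obtain ⟨z, hz, hw⟩ := h
    exact ⟨z, of_gaStep_eq_some hz, ih hw⟩

theorem runFrom_of_runFrom_grStep {p q : Option X × X} {w : List (E ⊕ E)}
    (h : runFrom (grStep f XS Scv) p w = some q) :
    runFrom f p.2 (w.map (Sum.elim id id)) = some q.2 :=
  runFrom_of_runFrom_gaStep (runFrom_grStep_eq_some.1 h).2

theorem runFrom_saStep_some_embed (x : X) (s : List E) :
    runFrom (saStep f XS Scv) (some x) (embed s) = (runFrom (subStep f XS) x s).map some := by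
  induction s generalizing x with
  | nil => rfl
  | cons e s ih =>
    simp only [embed, List.map_cons, runFrom, saStep] at ih ⊢
    cases subStep f XS x e with
    | none => rfl
    | some y => exact ih y

theorem runFrom_grStep_attack {x0 : X} {s : List E} {σ : E} {p : Option X × X}
    (h : runFrom (grStep f XS Scv) (grInit x0) (embed s ++ [Sum.inr σ]) = some p) :
    p.1 = none ∧ s ∈ Lang (subStep f XS) x0 ∧ runFrom f x0 (s ++ [σ]) = some p.2 := by
  have hplant := runFrom_of_runFrom_grStep h
  have hsa := (runFrom_grStep_eq_some.1 h).1
  dsimp only [grInit] at hplant hsa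
  simp only [embed, List.map_append, List.map_map, Sum.elim_comp_inl, List.map_id,
    List.map_cons, List.map_nil, Sum.elim_inr, id] at hplant
  rw [runFrom_append, runFrom_saStep_some_embed, Option.bind_eq_some_iff] at hsa
  obtain ⟨b, hb, hatt⟩ := hsa
  obtain ⟨xs, hxs, rfl⟩ := Option.map_eq_some_iff.1 hb
  refine ⟨?_, Option.isSome_iff_exists.2 ⟨xs, hxs⟩, hplant⟩
  rw [runFrom_singleton, saStep] at hatt
  split_ifs at hatt
  exact (Option.some_inj.1 hatt).symm

theorem grStep_none (x : X) (a : E ⊕ E) :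
    grStep f XS Scv (none, x) a = (gaStep f Scv x a).map (Prod.mk none) := by
  simp only [grStep, prodStep, saStep, Option.bind_some]

theorem subStep_grStep_none_inl (Q : Set (Option X × X)) (x : X) (e : E) :
    subStep (grStep f XS Scv) Q (none, x) (Sum.inl e) =
      (subStep f {y | (none, y) ∈ Q} x e).map (Prod.mk none) := by
  simp only [subStep, grStep_none, gaStep]
  cases f x e <;> simp [apply_ite]

theorem runFrom_subStep_grStep_none_embed (Q : Set (Option X × X)) (x : X) (t : List E) :
    runFrom (subStep (grStep f XS Scv) Q) (none, x) (embed t) =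
      (runFrom (subStep f {y | (none, y) ∈ Q}) x t).map (Prod.mk none) := by
  induction t generalizing x with
  | nil => rfl
  | cons e t ih =>
    simp only [embed, List.map_cons, runFrom, subStep_grStep_none_inl] at ih ⊢
    cases subStep f {y | (none, y) ∈ Q} x e with
    | none => rfl
    | some y => exact ih y

theorem runFrom_subStep_grStep_none {Q : Set (Option X × X)} {w : List (E ⊕ E)} :
    ∀ {x : X} {q : Option X × X}, runFrom (subStep (grStep f XS Scv) Q) (none, x) w = some q →
      ∃ y, q = (none, y) ∧
        runFrom (subStep f {y | (none, y) ∈ Q}) x (w.map (Sum.elim id id)) = some y := by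
  induction w with
  | nil => rintro x q ⟨⟩; exact ⟨x, rfl, rfl⟩
  | cons a w ih =>
    intro x q h
    simp only [runFrom, Option.bind_eq_some_iff, subStep_eq_some, grStep_none,
      Option.map_eq_some_iff, List.map_cons] at h ⊢
    obtain ⟨_, ⟨⟨z, hz, rfl⟩, hxQ, hzQ⟩, hw⟩ := h
    obtain ⟨y, rfl, hy⟩ := ih hw
    exact ⟨y, rfl, z, ⟨of_gaStep_eq_some hz, hxQ, hzQ⟩, hy⟩

theorem runFrom_subStep_grStep_diag_embed {Q : Set (Option X × X)}
    (hQ : ∀ y, (some y, y) ∈ Q) (x : X) (s : List E) :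
    runFrom (subStep (grStep f XS Scv) Q) (some x, x) (embed s) =
      (runFrom (subStep f XS) x s).map fun y => (some y, y) := by
  induction s generalizing x with
  | nil => rfl
  | cons e s ih =>
    have hstep : subStep (grStep f XS Scv) Q (some x, x) (Sum.inl e) =
        (subStep f XS x e).map fun y => (some y, y) := by
      cases h : subStep f XS x e with
      | none =>
        have : grStep f XS Scv (some x, x) (Sum.inl e) = none := by
          simp only [grStep, prodStep, saStep, h, Option.map_none, Option.bind_none]
        simp only [subStep, this, Option.bind_none, Option.map_none]
      | some y =>
        rw [Option.map_some, subStep_eq_some, grStep_eq_some]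
        exact ⟨⟨by simp [saStep, h], (subStep_eq_some.1 h).1⟩, hQ x, hQ y⟩
    simp only [embed, List.map_cons, runFrom, hstep] at ih ⊢
    cases subStep f XS x e with
    | none => rfl
    | some y => exact ih y

end Attack

section Forward

variable {f : X → E → Option X} {x0 : X} {Suc Scv : Set E} {XS XR Bad : Set X}
  {Q : Set (Option X × X)}

def attackReach (f : X → E → Option X) (x0 : X) (XS : Set X) (Scv : Set E)
    (Q : Set (Option X × X)) : Set X :=
  {x | ∃ s, ∃ σ ∈ Scv, ∃ t, runFrom (subStep (grStep f XS Scv) Q) (grInit x0)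
    (embed s ++ [Sum.inr σ] ++ embed t) = some (none, x)}

theorem ResilientSup.of_runFrom {s t : List E} {σ : E} {p : Option X × X}
    (hres : ResilientSup f x0 Scv XS XR Bad Q) (hσ : σ ∈ Scv)
    (h : runFrom (subStep (grStep f XS Scv) Q) (grInit x0)
      (embed s ++ [Sum.inr σ] ++ embed t) = some p) :
    (∀ t', t' <+: t → ∀ y, runFrom f x0 (s ++ σ :: t') = some y → y ∉ Bad) ∧
      ∃ u q, runFrom (subStep (grStep f XS Scv) Q) (grInit x0)
          (embed s ++ [Sum.inr σ] ++ embed t ++ u) = some q ∧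
        q.1 = none ∧ q.2 ∈ XR := by
  have hfull : embed s ++ [Sum.inr σ] ++ embed t ∈ SRLang f x0 XS Scv Q :=
    Option.isSome_iff_exists.2 ⟨p, h⟩
  have hatt := prefixClosed_Lang _ _ _ _ hfull
  exact (hres.2 s (prefixClosed_Lang _ _ _ _ hatt) σ hσ
    (Lang_subStep_subset _ _ _ hatt)).2 t hfull

theorem mem_attackReach_of_runFrom {x y : X} {T : List E}
    (hx : x ∈ attackReach f x0 XS Scv Q)
    (h : runFrom (subStep f {y | (none, y) ∈ Q}) x T = some y) :
    y ∈ attackReach f x0 XS Scv Q := by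
  obtain ⟨s, σ, hσ, t, hrun⟩ := hx
  refine ⟨s, σ, hσ, t ++ T, ?_⟩
  rw [embed_append, ← List.append_assoc, runFrom_append_of_eq_some hrun,
    runFrom_subStep_grStep_none_embed, h, Option.map_some]

theorem none_mem_of_mem_attackReach (hQ : grInit x0 ∈ Q) {x : X}
    (hx : x ∈ attackReach f x0 XS Scv Q) : ((none : Option X), x) ∈ Q :=
  let ⟨_, _, _, _, h⟩ := hx
  mem_of_runFrom_subStep hQ h

theorem attackReach_subset_compl (hres : ResilientSup f x0 Scv XS XR Bad Q) :
    attackReach f x0 XS Scv Q ⊆ Badᶜ := by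
  rintro x ⟨s, σ, hσ, t, h⟩
  refine (hres.of_runFrom hσ h).1 t (List.prefix_refl t) x ?_
  simpa [embed, grInit] using runFrom_of_runFrom_grStep (runFrom_of_runFrom_subStep h)

theorem exists_runFrom_of_mem_attackReach (hres : ResilientSup f x0 Scv XS XR Bad Q) {x : X}
    (hx : x ∈ attackReach f x0 XS Scv Q) :
    ∃ r, ∃ y ∈ XR, runFrom (subStep f {y | (none, y) ∈ Q}) x r = some y := by
  obtain ⟨s, σ, hσ, t, h⟩ := hx
  obtain ⟨u, q, hu, hq₁, hq₂⟩ := (hres.of_runFrom hσ h).2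
  rw [runFrom_append_of_eq_some h] at hu
  obtain ⟨y, rfl, hy⟩ := runFrom_subStep_grStep_none hu
  exact ⟨_, y, hq₂, hy⟩

theorem recoveryInvariant_attackReach (hQ : IsGRSupervisor f x0 Suc Scv XS Q)
    (hres : ResilientSup f x0 Scv XS XR Bad Q) :
    RecoveryInvariant f Suc XR Bad (attackReach f x0 XS Scv Q) where
  subset_compl := attackReach_subset_compl hres
  uncontrollable x hx e he y hy := by
    have hxQ := none_mem_of_mem_attackReach hQ.init_mem hx
    have hstep : grStep f XS Scv (none, x) (Sum.inl e) = some (none, y) := by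
      rw [grStep_none, gaStep, hy, Option.map_some]
    refine mem_attackReach_of_runFrom hx (T := [e]) ?_
    rw [runFrom_singleton, subStep_eq_some]
    exact ⟨hy, hxQ, hQ.controllable _ hxQ e he _ hstep⟩
  reach x hx := by
    obtain ⟨r, y, hy, hr⟩ := exists_runFrom_of_mem_attackReach hres hx
    exact ⟨r, y, hy, runFrom_subStep_of_forall_prefix hx (fun t ht z hz =>
      mem_attackReach_of_runFrom hx (runFrom_subStep_of_prefix hr ht hz))
      (runFrom_of_runFrom_subStep hr)⟩

theorem detStates_subset_attackReach (hres : ResilientSup f x0 Scv XS XR Bad Q) :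
    detStates f x0 XS Scv ⊆ attackReach f x0 XS Scv Q := by
  rintro xd ⟨_, ⟨s, σ, rfl, hσ, -, hs, hatt⟩, hxd⟩
  obtain ⟨p, hp⟩ := Option.isSome_iff_exists.1 (hres.2 s (hres.1 s hs) σ hσ hatt).1
  obtain ⟨hp₁, -, hp₂⟩ := runFrom_grStep_attack (runFrom_of_runFrom_subStep hp)
  have hp_eq : p = (none, xd) := Prod.ext hp₁ (Option.some_inj.1 (hp₂.symm.trans hxd))
  exact ⟨s, σ, hσ, [], by rwa [← hp_eq, embed, List.map_nil, List.append_nil]⟩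

end Forward

section Backward

variable {f : X → E → Option X} {x0 : X} {Suc Scv : Set E} {XS XR Bad R : Set X}

def afterAttackIn (R : Set X) : Set (Option X × X) := {p | p.1 = none → p.2 ∈ R}

theorem some_mem_afterAttackIn (x y : X) : ((some x, y) : Option X × X) ∈ afterAttackIn R :=
  fun h => (Option.some_ne_none x h).elim

def recoverySupervisor (f : X → E → Option X) (x0 : X) (XS : Set X) (Scv : Set E)
    (R : Set X) : Set (Option X × X) :=
  grStates f x0 XS Scv ∩ afterAttackIn R

theorem isGRSupervisor_recoverySupervisor
    (hR : ∀ x ∈ R, ∀ e ∈ Suc, ∀ y, f x e = some y → y ∈ R) :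
    IsGRSupervisor f x0 Suc Scv XS (recoverySupervisor f x0 XS Scv R) where
  subset := Set.inter_subset_left
  init_mem := ⟨⟨[], rfl⟩, some_mem_afterAttackIn x0 x0⟩
  controllable := by
    rintro ⟨a, x⟩ ⟨⟨w, hw⟩, hpR⟩ e he ⟨b, y⟩ hstep
    refine ⟨⟨w ++ [Sum.inl e], by
      rw [runFrom_append_of_eq_some hw, runFrom_singleton, hstep]⟩, ?_⟩
    rintro rfl
    rw [grStep_eq_some] at hstep
    cases a with
    | none => exact hR x (hpR rfl) e he y hstep.2
    | some a => simp [saStep] at hstep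

theorem runFrom_recoverySupervisor (w : List (E ⊕ E)) :
    runFrom (subStep (grStep f XS Scv) (recoverySupervisor f x0 XS Scv R)) (grInit x0) w =
      runFrom (subStep (grStep f XS Scv) (afterAttackIn R)) (grInit x0) w :=
  runFrom_subStep_reach_inter _ _ _ w

theorem SRLang_recoverySupervisor :
    SRLang f x0 XS Scv (recoverySupervisor f x0 XS Scv R) =
      Lang (subStep (grStep f XS Scv) (afterAttackIn R)) (grInit x0) := by
  ext w
  simp only [SRLang, Lang, Set.mem_ofPred_eq, runFrom_recoverySupervisor]

theorem runFrom_subStep_grStep_afterAttackIn_none_embed (x : X) (t : List E) :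
    runFrom (subStep (grStep f XS Scv) (afterAttackIn R)) (none, x) (embed t) =
      (runFrom (subStep f R) x t).map (Prod.mk none) := by
  rw [runFrom_subStep_grStep_none_embed,
    show {y | ((none : Option X), y) ∈ afterAttackIn R} = R from
      Set.ext fun _ => ⟨fun h => h rfl, fun h _ => h⟩]

theorem exists_runFrom_attack_afterAttackIn (hdet : detStates f x0 XS Scv ⊆ R) {s : List E}
    {σ : E} (hσ : σ ∈ Scv)
    (hs : embed s ∈ Lang (subStep (grStep f XS Scv) (afterAttackIn R)) (grInit x0))
    (hatt : embed s ++ [Sum.inr σ] ∈ GRLang f x0 XS Scv) :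
    ∃ d ∈ R, runFrom f x0 (s ++ [σ]) = some d ∧
      runFrom (subStep (grStep f XS Scv) (afterAttackIn R)) (grInit x0)
        (embed s ++ [Sum.inr σ]) = some (none, d) := by
  obtain ⟨ps, hps⟩ := Option.isSome_iff_exists.1 hs
  obtain ⟨p, hp⟩ := Option.isSome_iff_exists.1 hatt
  obtain ⟨hp₁, hsS, hp₂⟩ := runFrom_grStep_attack hp
  have hpR : p.2 ∈ R :=
    hdet ⟨s ++ [σ], ⟨s, σ, rfl, hσ, Option.isSome_iff_exists.2 ⟨_, hp₂⟩, hsS, hatt⟩, hp₂⟩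
  have hp_eq : p = (none, p.2) := Prod.ext hp₁ rfl
  refine ⟨p.2, hpR, hp₂, ?_⟩
  rw [runFrom_append_of_eq_some (runFrom_of_runFrom_subStep hps), runFrom_singleton] at hp
  rw [runFrom_append_of_eq_some hps, runFrom_singleton, subStep_eq_some, ← hp_eq]
  exact ⟨hp, mem_of_runFrom_subStep (some_mem_afterAttackIn x0 x0) hps, fun _ => hpR⟩

theorem resilientSup_recoverySupervisor (hR : RecoveryInvariant f Suc XR Bad R)
    (hdet : detStates f x0 XS Scv ⊆ R) :
    ResilientSup f x0 Scv XS XR Bad (recoverySupervisor f x0 XS Scv R) := by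
  simp only [ResilientSup, SRLang_recoverySupervisor, runFrom_recoverySupervisor]
  refine ⟨fun s hs => ?_, fun s hs σ hσ hatt => ?_⟩
  · simpa [Lang, grInit, runFrom_subStep_grStep_diag_embed fun y => some_mem_afterAttackIn y y]
      using hs
  obtain ⟨d, hdR, hd, hattC⟩ := exists_runFrom_attack_afterAttackIn hdet hσ hs hatt
  refine ⟨Option.isSome_iff_exists.2 ⟨_, hattC⟩, fun t ht => ?_⟩
  simp only [Lang, Set.mem_ofPred_eq, runFrom_append_of_eq_some hattC,
    runFrom_subStep_grStep_afterAttackIn_none_embed, Option.isSome_map] at ht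
  obtain ⟨z, hz⟩ := Option.isSome_iff_exists.1 ht
  refine ⟨fun t' ht' y hy => ?_, ?_⟩
  · rw [← List.singleton_append, ← List.append_assoc, runFrom_append_of_eq_some hd] at hy
    exact hR.subset_compl (mem_of_runFrom_subStep hdR (runFrom_subStep_of_prefix hz ht' hy))
  · obtain ⟨r, y, hy, hr⟩ := hR.reach z (mem_of_runFrom_subStep hdR hz)
    refine ⟨embed r, (none, y), ?_, rfl, hy⟩
    rw [runFrom_append, runFrom_append_of_eq_some hattC,
      runFrom_subStep_grStep_afterAttackIn_none_embed, hz, Option.map_some, Option.bind_some,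
      runFrom_subStep_grStep_afterAttackIn_none_embed, hr, Option.map_some]

end Backward

end RobustRec

theorem RobustRec.exists_resilient_iff_AERobustRecoverable_general
    {X E : Type*}
    (f : X → E → Option X) (x0 : X) (Suc Scv : Set E) (XUS XS XR : Set X) :
    (∃ Q : Set (Option X × X), IsGRSupervisor f x0 Suc Scv XS Q ∧
        ResilientSup f x0 Scv XS XR (vulnStates f Scv ∪ XUS) Q) ↔
      AERobustRecoverable f x0 Suc Scv XUS XS XR := by
  constructor
  · rintro ⟨Q, hQ, hres⟩
    exact (detStates_subset_attackReach hres).trans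
      (recoveryInvariant_attackReach hQ hres).subset_recSet
  · intro hrec
    exact ⟨_, isGRSupervisor_recoverySupervisor recoveryInvariant_recSet.uncontrollable,
      resilientSup_recoverySupervisor recoveryInvariant_recSet hrec⟩

/-- Theorem 2 of the paper. There exists a resilient
supervisor `S^R` for the attacked closed-loop system `G^R` w.r.t. `Σ_{c,v}` and
`G_robust` iff the attacked system `Sa/Ga` is AE-robust recoverable w.r.t.
`G_robust`. -/
theorem RobustRec.exists_resilient_iff_AERobustRecoverable
    {X E : Type*} [Fintype X] [Fintype E]
    (f : X → E → Option X) (x0 : X) (Sc Suc Scv : Set E) (XUS XS XR : Set X)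
    (hdisj : Sc ∩ Suc = ∅) (hcover : Sc ∪ Suc = Set.univ) (hScv : Scv ⊆ Sc)
    (hS : IsSupervisor f x0 Suc XUS XS)
    (hXR : XR ∩ (vulnStates f Scv ∪ XUS) = ∅) :
    (∃ Q : Set (Option X × X), IsGRSupervisor f x0 Suc Scv XS Q ∧
        ResilientSup f x0 Scv XS XR (vulnStates f Scv ∪ XUS) Q) ↔
      AERobustRecoverable f x0 Suc Scv XUS XS XR :=
  RobustRec.exists_resilient_iff_AERobustRecoverable_general f x0 Suc Scv XUS XS XR
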